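/- arXiv:math/0508185 — 2 statements merged into one kernel-verified Lean document; each statement's English description precedes it below -/
import Mathlib

section
/- For all nonnegative integers u, v, d, the identity (1/u!) * \sum_{i=0}^{u} \binom{u}{i} (-1)^i * d(d+1)\cdots(d+i-1) / (v+d+i)! = \binom{u+v}{u} / (u+v+d)! holds, where the empty product (when i=0) equals 1. -/
/-!
Write `S(u, d)` for the sum with `v` fixed. Pascal's rule splits `S(u + 1, d)` into `S(u, d)` and a
shifted sum, which becomes `-d * S(u, d + 1)` because `d (d+1) ⋯ (d+i) = d * (d+1) ⋯ (d+i)`.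
The closed form `(u+v)! / (v! (u+v+d)!)` obeys the same recurrence, as `(u+v+d+1) - d = u+v+1`,
and `u! * C(u+v, u) = (u+v)! / v!`.
-/

open Finset Nat

def alternatingAscSum (K : Type*) [Field K] (u v d : ℕ) : K :=
  ∑ i ∈ range (u + 1), (u.choose i : K) * (-1) ^ i * (d.ascFactorial i : K) / ((v + d + i)! : K)

section

variable {K : Type*} [Field K]

theorem alternatingAscSum_succ (u v d : ℕ) :
    alternatingAscSum K (u + 1) v d
      = alternatingAscSum K u v d - d * alternatingAscSum K u v (d + 1) := by
  let f : ℕ → ℕ → K := fun i _ => (-1) ^ i * (d.ascFactorial i : K) / ((v + d + i)! : K)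
  have hpascal := sum_choose_succ_mul f u
  simp only [alternatingAscSum, mul_sum, sub_eq_add_neg, ← sum_neg_distrib]
  simp only [f, mul_assoc, mul_div_assoc] at hpascal ⊢
  rw [hpascal]
  congr 1
  refine sum_congr rfl fun i _ => ?_
  rw [ascFactorial_succ, ← succ_ascFactorial, show v + d + (i + 1) = v + (d + 1) + i by omega]
  push_cast
  ring

theorem alternatingAscSum_eq [CharZero K] (u v d : ℕ) :
    alternatingAscSum K u v d = ((u + v)! : K) / ((v ! : K) * ((u + v + d)! : K)) := by
  have hv : (v ! : K) ≠ 0 := Nat.cast_ne_zero.mpr (factorial_ne_zero v)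
  induction u generalizing d with
  | zero => simp [alternatingAscSum, div_mul_cancel_left₀ hv]
  | succ u ih =>
    rw [alternatingAscSum_succ, ih, ih, show u + 1 + v = u + v + 1 by omega,
      show u + v + 1 + d = u + v + d + 1 by omega, show u + v + (d + 1) = u + v + d + 1 by omega]
    have hw : ((u + v + d)! : K) ≠ 0 := Nat.cast_ne_zero.mpr (factorial_ne_zero _)
    have hs : ((u + v + d : ℕ) + 1 : K) ≠ 0 := by norm_cast
    simp only [factorial_succ]
    push_cast at hs ⊢
    field_simp
    ring

end

/-- For all nonnegative integers `u, v, d`,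
`(1/u!) * ∑_{i=0}^{u} C(u,i) (-1)^i d(d+1)⋯(d+i-1) / (v+d+i)! = C(u+v,u) / (u+v+d)!`,
where the rising factorial of length 0 is 1. -/
theorem stmt_0 (u v d : ℕ) :
    (1 / (u.factorial : ℚ)) *
      ∑ i ∈ Finset.range (u + 1),
        (u.choose i : ℚ) * (-1) ^ i * (d.ascFactorial i : ℚ) / ((v + d + i).factorial : ℚ)
    = ((u + v).choose u : ℚ) / ((u + v + d).factorial : ℚ) := by
  have hchoose : ((u + v).choose u : ℚ) * u ! * v ! = (u + v)! := by
    rw [mul_right_comm]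
    exact_mod_cast add_comm v u ▸ add_choose_mul_factorial_mul_factorial v u
  rw [← alternatingAscSum, alternatingAscSum_eq, ← hchoose]
  field_simp
end

section
/- For real c > 0, x > 0, and integer k \geq 1, the contour integral (1/(2\pi i)) \int_{(c)} x^s / s^{k+1} ds equals 0 if 0 < x \leq 1 and equals (\log x)^k / k! if x \geq 1, where (c) denotes the vertical line Re(s) = c. -/
/-!
Integration by parts gives `∫₀^∞ uᵏ e^{-zu} du = k! / z^(k+1)` for `Re z > 0`, so the
function `g(u) = uᵏ e^{-cu} / k!` on `u ≥ 0`, extended by `0`, has Fourier transform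
`(c + 2πiξ)^-(k+1)`. For `k ≥ 1` this transform decays like `ξ⁻²` and `g` is continuous, so
Fourier inversion at `u = log x` gives `(1/2π) ∫ x^(c+it) / (c+it)^(k+1) dt = x^c g(log x)`,
which is `(log x)ᵏ / k!` for `x ≥ 1` and `0` for `x < 1`. The integrand is absolutely
integrable, so the principal value is the full integral.
-/

open Complex Filter MeasureTheory Set Real
open scoped FourierTransform Topology Nat

section Laplace

variable {z : ℂ}

lemma tendsto_ofReal_pow_mul_cexp_neg_mul_atTop (hz : 0 < z.re) (m : ℕ) :
    Tendsto (fun u : ℝ => (u : ℂ) ^ m * cexp (-z * u)) atTop (𝓝 0) := by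
  rw [tendsto_zero_iff_norm_tendsto_zero]
  refine (tendsto_rpow_mul_exp_neg_mul_atTop_nhds_zero m z.re hz).congr' ?_
  filter_upwards [eventually_gt_atTop 0] with u hu
  simp [Complex.norm_exp, abs_of_pos hu, mul_comm]

lemma integrableOn_ofReal_pow_mul_cexp_neg_mul_Ioi (hz : 0 < z.re) (m : ℕ) :
    IntegrableOn (fun u : ℝ => (u : ℂ) ^ m * cexp (-z * u)) (Ioi 0) := by
  have hreal : IntegrableOn (fun u : ℝ => u ^ (m : ℝ) * rexp (-z.re * u ^ (1 : ℝ))) (Ioi 0) :=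
    integrableOn_rpow_mul_exp_neg_mul_rpow (neg_one_lt_zero.trans_le m.cast_nonneg) one_pos hz
  refine hreal.mono' (Measurable.aestronglyMeasurable (by fun_prop)) ?_
  filter_upwards [ae_restrict_mem measurableSet_Ioi] with u hu
  simp [Complex.norm_exp, abs_of_pos (mem_Ioi.mp hu)]

lemma integral_ofReal_pow_mul_cexp_neg_mul_Ioi (hz : 0 < z.re) (k : ℕ) :
    ∫ u in Ioi (0 : ℝ), (u : ℂ) ^ k * cexp (-z * u) = k ! / z ^ (k + 1) := by
  have hz0 : z ≠ 0 := fun h => by simp [h] at hz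
  induction k with
  | zero =>
    simpa [neg_div, div_neg] using integral_exp_mul_complex_Ioi (a := -z) (by simpa) 0
  | succ m ih =>
    have hderiv (u : ℝ) : HasDerivAt (fun v : ℝ => -((v : ℂ) ^ (m + 1) * cexp (-z * v)) / z)
        ((u : ℂ) ^ (m + 1) * cexp (-z * u)
          - (m + 1) / z * ((u : ℂ) ^ m * cexp (-z * u))) u := by
      have h := (((hasDerivAt_pow (m + 1) (u : ℂ)).mul
        ((hasDerivAt_id (u : ℂ)).const_mul (-z)).cexp).neg.div_const z).comp_ofReal
      convert h using 1
      · rfl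
      simp only [Nat.add_sub_cancel, id]
      push_cast
      field_simp
      ring
    have hparts := integral_Ioi_of_hasDerivAt_of_tendsto' (fun u _ => hderiv u)
      ((integrableOn_ofReal_pow_mul_cexp_neg_mul_Ioi hz (m + 1)).sub
        ((integrableOn_ofReal_pow_mul_cexp_neg_mul_Ioi hz m).const_mul _))
      (by simpa using ((tendsto_ofReal_pow_mul_cexp_neg_mul_atTop hz (m + 1)).neg.div_const z))
    rw [integral_sub (integrableOn_ofReal_pow_mul_cexp_neg_mul_Ioi hz (m + 1))
      ((integrableOn_ofReal_pow_mul_cexp_neg_mul_Ioi hz m).const_mul _), integral_const_mul, ih,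
      sub_eq_iff_eq_add] at hparts
    rw [hparts, Nat.factorial_succ]
    push_cast
    field_simp
    ring

end Laplace

section VerticalLine

variable {c : ℝ} {n : ℕ}

lemma integrable_inv_ofReal_add_mul_I_pow (hc : c ≠ 0) (hn : 2 ≤ n) :
    Integrable fun t : ℝ => ((c + t * I) ^ n)⁻¹ := by
  set m := min (c ^ 2) 1
  have hm : 0 < m := lt_min (by positivity) one_pos
  have hbound (t : ℝ) :
      ‖((c + t * I : ℂ) ^ n)⁻¹‖ ≤ (|c| ^ (n - 2) * m)⁻¹ * (1 + t ^ 2)⁻¹ := by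
    set w : ℂ := c + t * I
    have hsq : ‖w‖ ^ 2 = c ^ 2 + t ^ 2 := by rw [Complex.sq_norm, normSq_add_mul_I]
    have hre : |c| ≤ ‖w‖ := by simpa [w] using abs_re_le_norm w
    have hlower : |c| ^ (n - 2) * m * (1 + t ^ 2) ≤ ‖w ^ n‖ := calc
      |c| ^ (n - 2) * m * (1 + t ^ 2) ≤ ‖w‖ ^ (n - 2) * ‖w‖ ^ 2 := by
        rw [hsq, mul_assoc]
        gcongr
        nlinarith [min_le_left (c ^ 2) 1, min_le_right (c ^ 2) 1, sq_nonneg t]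
      _ = _ := by rw [← pow_add, Nat.sub_add_cancel hn, norm_pow]
    rw [norm_inv, ← mul_inv]
    exact inv_anti₀ (by positivity) hlower
  exact (integrable_inv_one_add_sq.const_mul _).mono' (by fun_prop) (.of_forall hbound)

lemma integrable_cpow_div_ofReal_add_mul_I_pow {x : ℝ} (hx : 0 < x) (hc : c ≠ 0)
    (hn : 2 ≤ n) :
    Integrable fun t : ℝ => (x : ℂ) ^ (c + t * I) / (c + t * I) ^ n := by
  refine ((integrable_inv_ofReal_add_mul_I_pow hc hn).norm.const_mul (x ^ c)).mono'
    (Measurable.aestronglyMeasurable (by fun_prop)) (.of_forall fun t => ?_)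
  rw [norm_div, norm_cpow_eq_rpow_re_of_pos hx, div_eq_mul_inv, norm_inv]
  simp

lemma ofReal_cpow_ofReal_add_mul_I {x : ℝ} (hx : 0 < x) (c t : ℝ) :
    (x : ℂ) ^ (c + t * I) = (x : ℂ) ^ (c : ℂ) * cexp (↑(t * Real.log x) * I) := by
  rw [cpow_add _ _ (ofReal_ne_zero.mpr hx.ne')]
  congr 1
  rw [cpow_def_of_ne_zero (ofReal_ne_zero.mpr hx.ne'), ← ofReal_log hx.le]
  push_cast
  ring_nf

end VerticalLine

noncomputable def truncPowExp (c : ℝ) (k : ℕ) : ℝ → ℂ :=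
  indicator (Ici 0) fun u => (u : ℂ) ^ k * cexp (-c * u) / k !

section TruncPowExp

variable {c : ℝ} {k : ℕ}

lemma truncPowExp_eq_of_ne_zero (hk : k ≠ 0) :
    truncPowExp c k = fun u => ((max u 0 : ℝ) : ℂ) ^ k * cexp (-c * (max u 0 : ℝ)) / k ! := by
  ext u
  rcases le_or_gt 0 u with hu | hu
  · simp [truncPowExp, hu]
  · simp [truncPowExp, hu.not_ge, hu.le, zero_pow hk]

lemma continuous_truncPowExp (hk : k ≠ 0) : Continuous (truncPowExp c k) := by
  rw [truncPowExp_eq_of_ne_zero hk]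
  fun_prop

lemma integrable_truncPowExp (hc : 0 < c) (k : ℕ) : Integrable (truncPowExp c k) := by
  rw [truncPowExp, integrable_indicator_iff measurableSet_Ici,
    integrableOn_Ici_iff_integrableOn_Ioi]
  exact (integrableOn_ofReal_pow_mul_cexp_neg_mul_Ioi (by simpa using hc) k).div_const _

lemma fourier_truncPowExp (hc : 0 < c) (k : ℕ) (ξ : ℝ) :
    𝓕 (truncPowExp c k) ξ = ((c + (2 * π * ξ : ℝ) * I) ^ (k + 1))⁻¹ := by
  set z : ℂ := c + (2 * π * ξ : ℝ) * I
  have hz : 0 < z.re := by simpa [z] using hc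
  have hintegrand (v : ℝ) : cexp (↑(-2 * π * v * ξ) * I) • truncPowExp c k v
      = indicator (Ici 0) (fun v : ℝ => (v : ℂ) ^ k * cexp (-z * v) / k !) v := by
    by_cases hv : 0 ≤ v
    · simp only [truncPowExp, indicator_of_mem (mem_Ici.mpr hv), smul_eq_mul]
      rw [mul_div_assoc', mul_left_comm, ← Complex.exp_add]
      congr 3
      push_cast [z]
      ring
    · simp [truncPowExp, hv]
  rw [fourier_real_eq_integral_exp_smul, integral_congr_ae (.of_forall hintegrand),
    integral_indicator measurableSet_Ici, integral_Ici_eq_integral_Ioi, integral_div,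
    integral_ofReal_pow_mul_cexp_neg_mul_Ioi hz,
    div_div_cancel_left' (Nat.cast_ne_zero.mpr k.factorial_ne_zero)]

lemma integrable_fourier_truncPowExp (hc : 0 < c) (hk : k ≠ 0) :
    Integrable (𝓕 (truncPowExp c k)) := by
  rw [funext (fourier_truncPowExp hc k)]
  exact (integrable_inv_ofReal_add_mul_I_pow hc.ne' (by omega)).comp_mul_left' (by positivity)

end TruncPowExp

lemma integral_cpow_div_ofReal_add_mul_I_pow {c x : ℝ} {k : ℕ} (hc : 0 < c) (hx : 0 < x)
    (hk : k ≠ 0) :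
    ∫ t : ℝ, (x : ℂ) ^ (c + t * I) / (c + t * I) ^ (k + 1)
      = 2 * π * (x : ℂ) ^ (c : ℂ) * truncPowExp c k (Real.log x) := by
  have hinv := (integrable_truncPowExp hc k).fourierInv_fourier_eq
    (integrable_fourier_truncPowExp hc hk) (continuous_truncPowExp hk).continuousAt
    (v := Real.log x)
  rw [fourierInv_eq'] at hinv
  have hpoint (ξ : ℝ) :
      (x : ℂ) ^ (c + (2 * π * ξ : ℝ) * I) / (c + (2 * π * ξ : ℝ) * I) ^ (k + 1)
        = (x : ℂ) ^ (c : ℂ) *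
          (cexp (↑(2 * π * inner ℝ ξ (Real.log x)) * I) • 𝓕 (truncPowExp c k) ξ) := by
    rw [fourier_truncPowExp hc, smul_eq_mul, ofReal_cpow_ofReal_add_mul_I hx,
      RCLike.inner_apply, conj_trivial]
    ring_nf
  have hscale := Measure.integral_comp_mul_left
    (fun t : ℝ => (x : ℂ) ^ (c + t * I) / (c + t * I) ^ (k + 1)) (2 * π)
  simp only [hpoint, integral_const_mul, hinv] at hscale
  rw [mul_assoc, hscale, abs_of_pos (by positivity), real_smul, ← mul_assoc]
  push_cast
  rw [mul_inv_cancel₀ (by simp [pi_ne_zero]), one_mul]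

lemma ofReal_cpow_mul_truncPowExp_log {c x : ℝ} (hx : 0 < x) (k : ℕ) :
    (x : ℂ) ^ (c : ℂ) * truncPowExp c k (Real.log x)
      = if 1 ≤ x then ((Real.log x ^ k / k ! : ℝ) : ℂ) else 0 := by
  split_ifs with hx1
  · have hexp : cexp (Real.log x * c) * cexp (-c * Real.log x) = 1 := by
      rw [← Complex.exp_add, ← Complex.exp_zero]
      ring_nf
    rw [truncPowExp, indicator_of_mem (mem_Ici.mpr (Real.log_nonneg hx1)),
      cpow_def_of_ne_zero (ofReal_ne_zero.mpr hx.ne'), ← ofReal_log hx.le]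
    push_cast
    linear_combination (Real.log x : ℂ) ^ k / k ! * hexp
  · rw [truncPowExp, indicator_of_notMem (by simpa using Real.log_neg hx (not_le.mp hx1)),
      mul_zero]

/-- For real `c > 0`, `x > 0` and integer `k ≥ 1`, the principal-value contour integral
`(1/(2πi)) ∫_(c) x^s / s^{k+1} ds` over the vertical line `Re s = c` equals `0` if
`0 < x ≤ 1` and `(log x)^k / k!` if `x ≥ 1`. -/
theorem stmt_9 (c x : ℝ) (hc : 0 < c) (hx : 0 < x) (k : ℕ) (hk : 1 ≤ k) :
    Tendsto
      (fun T : ℝ =>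
        ((1 / (2 * Real.pi) : ℝ) : ℂ) *
          ∫ t in (-T)..T,
            (x : ℂ) ^ ((c : ℂ) + t * Complex.I) / ((c : ℂ) + t * Complex.I) ^ (k + 1))
      atTop
      (nhds (if 1 ≤ x then (((Real.log x) ^ k / k.factorial : ℝ) : ℂ) else 0)) := by
  have hvalue : ((1 / (2 * π) : ℝ) : ℂ) *
      ∫ t : ℝ, (x : ℂ) ^ (c + t * I) / (c + t * I) ^ (k + 1)
      = if 1 ≤ x then ((Real.log x ^ k / k ! : ℝ) : ℂ) else 0 := by
    rw [integral_cpow_div_ofReal_add_mul_I_pow hc hx (by omega),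
      ← ofReal_cpow_mul_truncPowExp_log hx k]
    push_cast
    field_simp
  rw [← hvalue]
  exact (intervalIntegral_tendsto_integral
    (integrable_cpow_div_ofReal_add_mul_I_pow hx hc.ne' (n := k + 1) (by omega))
    tendsto_neg_atTop_atBot tendsto_id).const_mul _
end
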